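/- arXiv:nlin/0411031 — 4 statements merged into one kernel-verified Lean document; each statement's English description precedes it below -/
import Mathlib

section
/- Let V be continuously differentiable on an open interval I around 0 with V(0) = V'(0) = 0, V''(0) = ω² > 0, and x V'(x) > 0 for all x ∈ I \ {0}. For small E > 0, let x₋(E) < 0 < x₊(E) be the turning points, i.e. the unique solutions of V(x) = E in I. Define the increasing change of variable X(x) by V(x) = ½ ω² X(x)² with sign(X(x)) = sign(x), let x(X) be its inverse, and set Δ(X) = x(X) − x(−X). Then the period integral satisfies T(E) = √2 ∫_{x₋(E)}^{x₊(E)} dx / √(E − V(x)) = (2/ω) ∫₀¹ Δ'((√(2E)/ω) u) du / √(1 − u²), where both integrals converge as improper integrals. -/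
open Real Set MeasureTheory

/-! Writing `a = √(2E)/ω`, the substitution `x = x(s)` turns `E − V(x)` into `½ω²(a² − s²)`, so
`√2 ∫ dx/√(E − V) = (2/ω) ∫_{-a}^{a} x'(s) ds/√(a² − s²)`; folding `[-a, a]` at `0` produces
`Δ'(s) = x'(s) + x'(-s)`, and `s = a u` rescales to `[0, 1]`. Convergence is proved on the
`x` side, where it is elementary: `V' ≠ 0` at the turning points, so `E − V(x)` is bounded below by
a multiple of the distance to them, and the monotone change of variables carries it over. -/

theorem exists_pos_mul_sub_le_sub_of_hasDerivAt {f : ℝ → ℝ} {a b f' : ℝ} (hab : a ≤ b)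
    (hf : ContinuousOn f (Icc a b)) (hb : HasDerivAt f f' b) (hf' : 0 < f')
    (hlt : ∀ x ∈ Ico a b, f x < f b) :
    ∃ m > 0, ∀ x ∈ Icc a b, m * (b - x) ≤ f b - f x := by
  have hslope_cont : ContinuousOn (dslope f b) (Icc a b) := by
    intro x hx
    rcases eq_or_ne x b with rfl | hxb
    · exact (continuousAt_dslope_same.2 hb.differentiableAt).continuousWithinAt
    · exact (continuousWithinAt_dslope_of_ne hxb).2 (hf x hx)
  have hslope_pos : ∀ x ∈ Icc a b, 0 < dslope f b x := by
    intro x hx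
    rcases eq_or_lt_of_le hx.2 with rfl | hxb
    · rwa [dslope_same, hb.deriv]
    · rw [dslope_of_ne f hxb.ne, slope_def_field]
      exact div_pos_of_neg_of_neg (by linarith [hlt x ⟨hx.1, hxb⟩]) (by linarith)
  obtain ⟨x₀, hx₀, hmin⟩ := isCompact_Icc.exists_isMinOn (nonempty_Icc.2 hab) hslope_cont
  refine ⟨dslope f b x₀, hslope_pos x₀ hx₀, fun x hx => ?_⟩
  have hdiff : f b - f x = (b - x) * dslope f b x := by
    linear_combination (sub_smul_dslope f b x : (x - b) * dslope f b x = f x - f b)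
  rw [hdiff, mul_comm]
  exact mul_le_mul_of_nonneg_left (hmin hx) (by linarith [hx.2])

theorem intervalIntegrable_one_div_sqrt_of_mul_sub_le {h : ℝ → ℝ} {a b m : ℝ} (hab : a ≤ b)
    (hm : 0 < m) (hh : ContinuousOn h (Ioo a b)) (hle : ∀ x ∈ Ioo a b, m * (b - x) ≤ h x) :
    IntervalIntegrable (fun x => 1 / √(h x)) volume a b := by
  have hpos : ∀ x ∈ Ioo a b, 0 < h x := fun x hx =>
    (mul_pos hm (sub_pos.2 hx.2)).trans_le (hle x hx)
  have hmaj : IntervalIntegrable (fun x => (√m)⁻¹ * (b - x) ^ (-(1 / 2) : ℝ)) volume a b := by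
    simpa using ((intervalIntegral.intervalIntegrable_rpow' (a := b - a) (b := b - b)
      (r := -(1 / 2)) (by norm_num)).comp_sub_left b).const_mul (√m)⁻¹
  rw [intervalIntegrable_iff_integrableOn_Ioo_of_le hab] at hmaj ⊢
  refine hmaj.mono' ?_ ((ae_restrict_mem measurableSet_Ioo).mono fun x hx => ?_)
  · refine ContinuousOn.aestronglyMeasurable (fun x hx => ?_) measurableSet_Ioo
    exact continuousWithinAt_const.div (hh x hx).sqrt (sqrt_pos.2 (hpos x hx)).ne'
  · have hbx : 0 < b - x := sub_pos.2 hx.2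
    rw [norm_of_nonneg (by positivity), rpow_neg hbx.le, ← sqrt_eq_rpow, ← mul_inv,
      ← sqrt_mul hm.le, one_div]
    exact inv_anti₀ (by positivity) (sqrt_le_sqrt (hle x hx))

theorem intervalIntegrable_one_div_sqrt_sub_right {f : ℝ → ℝ} {a b f' : ℝ} (hab : a ≤ b)
    (hf : ContinuousOn f (Icc a b)) (hb : HasDerivAt f f' b) (hf' : 0 < f')
    (hlt : ∀ x ∈ Ico a b, f x < f b) :
    IntervalIntegrable (fun x => 1 / √(f b - f x)) volume a b := by
  obtain ⟨m, hm, hle⟩ := exists_pos_mul_sub_le_sub_of_hasDerivAt hab hf hb hf' hlt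
  exact intervalIntegrable_one_div_sqrt_of_mul_sub_le hab hm
    (continuousOn_const.sub (hf.mono Ioo_subset_Icc_self)) fun x hx => hle x (Ioo_subset_Icc_self hx)

theorem intervalIntegrable_one_div_sqrt_sub_left {f : ℝ → ℝ} {a b f' : ℝ} (hab : a ≤ b)
    (hf : ContinuousOn f (Icc a b)) (ha : HasDerivAt f f' a) (hf' : f' < 0)
    (hlt : ∀ x ∈ Ioc a b, f x < f a) :
    IntervalIntegrable (fun x => 1 / √(f a - f x)) volume a b := by
  rw [← neg_neg a] at ha
  have hreflect := intervalIntegrable_one_div_sqrt_sub_right (f := fun x => f (-x)) (f' := -f')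
    (neg_le_neg hab)
    (hf.comp continuousOn_neg fun x hx => ⟨le_neg.1 hx.2, neg_le.1 hx.1⟩)
    (by simpa [Function.comp_def] using ha.comp (-a) (hasDerivAt_neg (-a))) (neg_pos.2 hf')
    fun x hx => by simpa using hlt (-x) ⟨lt_neg.1 hx.2, neg_le.1 hx.1⟩
  simpa using ((IntervalIntegrable.iff_comp_neg).1 hreflect).symm

theorem intervalIntegrable_one_div_sqrt_sub_of_hasDerivAt {f : ℝ → ℝ} {a b c fa' fb' : ℝ}
    (hab : a ≤ b) (hf : ContinuousOn f (Icc a b)) (ha : HasDerivAt f fa' a)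
    (hb : HasDerivAt f fb' b) (hfa' : fa' < 0) (hfb' : 0 < fb') (hfa : f a = c) (hfb : f b = c)
    (hlt : ∀ x ∈ Ioo a b, f x < c) :
    IntervalIntegrable (fun x => 1 / √(c - f x)) volume a b := by
  have hleft := intervalIntegrable_one_div_sqrt_sub_left (b := (a + b) / 2) (by linarith)
    (hf.mono (Icc_subset_Icc_right (by linarith))) ha hfa'
    fun x hx => hfa ▸ hlt x ⟨hx.1, by linarith [hx.1, hx.2]⟩
  have hright := intervalIntegrable_one_div_sqrt_sub_right (a := (a + b) / 2) (by linarith)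
    (hf.mono (Icc_subset_Icc_left (by linarith))) hb hfb'
    fun x hx => hfb ▸ hlt x ⟨by linarith [hx.1, hx.2], hx.2⟩
  rw [hfa] at hleft
  rw [hfb] at hright
  exact hleft.trans hright

theorem IntervalIntegrable.add_comp_neg {f : ℝ → ℝ} {a : ℝ}
    (hf : IntervalIntegrable f volume (-a) a) :
    IntervalIntegrable (fun x => f x + f (-x)) volume 0 a := by
  have h0 : (0 : ℝ) ∈ uIcc (-a) a := by simp [mem_uIcc, le_total]
  refine (hf.mono_set (uIcc_subset_uIcc h0 right_mem_uIcc)).add ?_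
  simpa using ((IntervalIntegrable.iff_comp_neg).1
    (hf.mono_set (uIcc_subset_uIcc left_mem_uIcc h0))).symm

theorem intervalIntegral.integral_neg_self_eq_integral_add_comp_neg {f : ℝ → ℝ} {a : ℝ}
    (hf : IntervalIntegrable f volume (-a) a) :
    ∫ x in (-a)..a, f x = ∫ x in (0 : ℝ)..a, (f x + f (-x)) := by
  have h0 : (0 : ℝ) ∈ uIcc (-a) a := by simp [mem_uIcc, le_total]
  have hpos := hf.mono_set (uIcc_subset_uIcc h0 right_mem_uIcc)
  have hneg := hf.mono_set (uIcc_subset_uIcc left_mem_uIcc h0)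
  rw [← integral_add_adjacent_intervals hneg hpos, integral_add hpos (by simpa using
    ((IntervalIntegrable.iff_comp_neg).1 hneg).symm), add_comm, integral_comp_neg, neg_zero]

theorem deriv_sub_comp_neg {φ : ℝ → ℝ} {s : ℝ} (hs : DifferentiableAt ℝ φ s)
    (hs' : DifferentiableAt ℝ φ (-s)) :
    deriv (fun t => φ t - φ (-t)) s = deriv φ s + deriv φ (-s) := by
  rw [deriv_fun_sub hs (differentiableAt_comp_neg.2 hs'), deriv_comp_neg, sub_neg_eq_add]

theorem div_sqrt_one_sub_sq_eq {a : ℝ} (ha : 0 < a) (F : ℝ → ℝ) (u : ℝ) :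
    F (a * u) / √(1 - u ^ 2) = a * (F (a * u) / √(a ^ 2 - (a * u) ^ 2)) := by
  rw [show a ^ 2 - (a * u) ^ 2 = a ^ 2 * (1 - u ^ 2) by ring, sqrt_mul (sq_nonneg a),
    sqrt_sq ha.le, mul_div_assoc', mul_div_mul_left _ _ ha.ne']

theorem IntervalIntegrable.comp_mul_div_sqrt_one_sub_sq {F : ℝ → ℝ} {a : ℝ} (ha : 0 < a)
    (hF : IntervalIntegrable (fun s => F s / √(a ^ 2 - s ^ 2)) volume 0 a) :
    IntervalIntegrable (fun u => F (a * u) / √(1 - u ^ 2)) volume 0 1 := by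
  simp_rw [div_sqrt_one_sub_sq_eq ha]
  simpa [ha.ne'] using (hF.comp_mul_left (c := a)).const_mul a

theorem intervalIntegral.integral_div_sqrt_sq_sub_sq (F : ℝ → ℝ) {a : ℝ} (ha : 0 < a) :
    ∫ s in (0 : ℝ)..a, F s / √(a ^ 2 - s ^ 2) = ∫ u in (0 : ℝ)..1, F (a * u) / √(1 - u ^ 2) := by
  simp_rw [div_sqrt_one_sub_sq_eq ha]
  rw [integral_const_mul, integral_comp_mul_left (fun s => F s / √(a ^ 2 - s ^ 2)) ha.ne',
    mul_zero, mul_one, smul_eq_mul, mul_inv_cancel_left₀ ha.ne']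

theorem integral_deriv_sub_comp_neg_div_sqrt {φ : ℝ → ℝ} {a : ℝ} (ha : 0 < a)
    (hφ : ∀ s ∈ Ioo (-a) a, DifferentiableAt ℝ φ s)
    (hint : IntervalIntegrable (fun s => deriv φ s / √(a ^ 2 - s ^ 2)) volume (-a) a) :
    IntervalIntegrable (fun u => deriv (fun s => φ s - φ (-s)) (a * u) / √(1 - u ^ 2))
        volume 0 1 ∧
      ∫ s in (-a)..a, deriv φ s / √(a ^ 2 - s ^ 2) =
        ∫ u in (0 : ℝ)..1, deriv (fun s => φ s - φ (-s)) (a * u) / √(1 - u ^ 2) := by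
  have hodd : EqOn (fun s => deriv φ s / √(a ^ 2 - s ^ 2) + deriv φ (-s) / √(a ^ 2 - (-s) ^ 2))
      (fun s => deriv (fun s => φ s - φ (-s)) s / √(a ^ 2 - s ^ 2)) (Ioo 0 a) := fun s hs => by
    simp only [deriv_sub_comp_neg (hφ s ⟨by linarith [hs.1], hs.2⟩)
      (hφ (-s) ⟨neg_lt_neg hs.2, by linarith [hs.1]⟩), neg_sq, add_div]
  refine ⟨.comp_mul_div_sqrt_one_sub_sq ha ?_, ?_⟩
  · exact hint.add_comp_neg.congr_uIoo (uIoo_of_le ha.le ▸ hodd)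
  · rw [intervalIntegral.integral_neg_self_eq_integral_add_comp_neg hint,
      intervalIntegral.integral_congr_Ioo_of_le ha.le hodd,
      intervalIntegral.integral_div_sqrt_sq_sub_sq _ ha]

theorem StrictMonoOn.monotoneOn_image_of_leftInvOn {α β : Type*} [LinearOrder α] [Preorder β]
    {f : α → β} {g : β → α} {s : Set α} (hf : StrictMonoOn f s) (hg : LeftInvOn g f s) :
    MonotoneOn g (f '' s) := by
  rintro _ ⟨x, hx, rfl⟩ _ ⟨y, hy, rfl⟩ hxy
  rw [hg hx, hg hy]
  exact (hf.le_iff_le hx hy).1 hxy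

theorem eq_neg_and_eq_of_lt_of_sq_eq {u v a : ℝ} (ha : 0 ≤ a) (huv : u < v) (hu : u ^ 2 = a ^ 2)
    (hv : v ^ 2 = a ^ 2) : u = -a ∧ v = a := by
  have hsum : u + v = 0 :=
    (mul_eq_zero.1 (by linear_combination hu - hv : (u - v) * (u + v) = 0)).resolve_left
      (sub_ne_zero.2 huv.ne)
  have hv' : v = a := (sq_eq_sq₀ (by linarith) ha).1 hv
  exact ⟨by linarith, hv'⟩

theorem integral_one_div_sqrt_sub_eq_of_monotoneOn {V φ : ℝ → ℝ} {ω a E xm xp : ℝ} (hω : 0 < ω)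
    (ha : 0 ≤ a) (hx : xm ≤ xp) (hE : ω ^ 2 * a ^ 2 = 2 * E)
    (hφ : MonotoneOn φ (Ioo (-a) a)) (hφd : ∀ s ∈ Ioo (-a) a, DifferentiableAt ℝ φ s)
    (himg : φ '' Ioo (-a) a = Ioo xm xp)
    (hVφ : ∀ s ∈ Ioo (-a) a, V (φ s) = ω ^ 2 / 2 * s ^ 2) :
    (IntervalIntegrable (fun x => 1 / √(E - V x)) volume xm xp ↔
        IntervalIntegrable (fun s => deriv φ s / √(a ^ 2 - s ^ 2)) volume (-a) a) ∧
      √2 * ∫ x in xm..xp, 1 / √(E - V x) =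
        2 / ω * ∫ s in (-a)..a, deriv φ s / √(a ^ 2 - s ^ 2) := by
  have hderiv : ∀ s ∈ Ioo (-a) a, HasDerivWithinAt φ (deriv φ s) (Ioo (-a) a) s :=
    fun s hs => (hφd s hs).hasDerivAt.hasDerivWithinAt
  have hpulled : EqOn (fun s => deriv φ s • (1 / √(E - V (φ s))))
      (fun s => √2 / ω * (deriv φ s / √(a ^ 2 - s ^ 2))) (Ioo (-a) a) := by
    intro s hs
    have hgap : E - V (φ s) = (ω / √2) ^ 2 * (a ^ 2 - s ^ 2) := by
      rw [hVφ s hs, div_pow, sq_sqrt zero_le_two]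
      linear_combination -hE / 2
    simp only [hgap, sqrt_mul (sq_nonneg _), sqrt_sq (by positivity : 0 ≤ ω / √2), smul_eq_mul]
    field_simp
  have haa : -a ≤ a := by linarith
  constructor
  · rw [intervalIntegrable_iff_integrableOn_Ioo_of_le hx,
      intervalIntegrable_iff_integrableOn_Ioo_of_le haa, ← himg,
      integrableOn_image_iff_integrableOn_deriv_smul_of_monotoneOn measurableSet_Ioo hderiv hφ,
      integrableOn_congr_fun hpulled measurableSet_Ioo]
    exact integrable_const_mul_iff (IsUnit.mk0 _ (by positivity)) _
  · rw [intervalIntegral.integral_of_le hx, integral_Ioc_eq_integral_Ioo, ← himg,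
      integral_image_eq_integral_deriv_smul_of_monotoneOn measurableSet_Ioo hderiv hφ,
      setIntegral_congr_fun measurableSet_Ioo hpulled, integral_const_mul,
      intervalIntegral.integral_of_le haa, integral_Ioc_eq_integral_Ioo, ← mul_assoc,
      ← mul_div_assoc, mul_self_sqrt zero_le_two]

theorem period_integral_change_of_variable_general
    (ω : ℝ) (hω : 0 < ω) (p q : ℝ)
    (V : ℝ → ℝ) (hV : ContDiffOn ℝ 1 V (Ioo p q))
    (hconv : ∀ x ∈ Ioo p q, x ≠ 0 → 0 < x * deriv V x)
    (E : ℝ) (hE : 0 < E)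
    (xm xp : ℝ) (hxm : xm ∈ Ioo p q) (hxp : xp ∈ Ioo p q)
    (hxmneg : xm < 0) (hxppos : 0 < xp)
    (hVxm : V xm = E) (hVxp : V xp = E)
    (X : ℝ → ℝ) (hXcont : ContinuousOn X (Ioo p q))
    (hXmono : StrictMonoOn X (Ioo p q))
    (hXV : ∀ x ∈ Ioo p q, V x = (1 / 2) * ω ^ 2 * X x ^ 2)
    (xinv : ℝ → ℝ) (hinv : ∀ x ∈ Ioo p q, xinv (X x) = x)
    (hdiff : ∀ x ∈ Ioo p q, DifferentiableAt ℝ xinv (X x))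
    (Δ : ℝ → ℝ) (hΔ : Δ = fun s => xinv s - xinv (-s)) :
    IntervalIntegrable (fun x => 1 / Real.sqrt (E - V x)) volume xm xp ∧
      IntervalIntegrable
        (fun u => deriv Δ (Real.sqrt (2 * E) / ω * u) / Real.sqrt (1 - u ^ 2))
        volume 0 1 ∧
      Real.sqrt 2 * (∫ x in xm..xp, 1 / Real.sqrt (E - V x)) =
        (2 / ω) *
          ∫ u in (0 : ℝ)..1,
            deriv Δ (Real.sqrt (2 * E) / ω * u) / Real.sqrt (1 - u ^ 2) := by
  set a := √(2 * E) / ω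
  have ha : 0 < a := by positivity
  have hEa : ω ^ 2 * a ^ 2 = 2 * E := by
    rw [div_pow, sq_sqrt (by positivity), mul_div_cancel₀ _ (by positivity)]
  have hxmxp : xm < xp := hxmneg.trans hxppos
  have hIcc : Icc xm xp ⊆ Ioo p q := Icc_subset_Ioo hxm.1 hxp.2
  have hIoo : Ioo xm xp ⊆ Ioo p q := Ioo_subset_Icc_self.trans hIcc
  have hXsq : ∀ x ∈ Ioo p q, V x = E → X x ^ 2 = a ^ 2 := fun x hx hVx => by
    nlinarith [hXV x hx]
  obtain ⟨hXxm, hXxp⟩ := eq_neg_and_eq_of_lt_of_sq_eq ha.le (hXmono hxm hxp hxmxp)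
    (hXsq xm hxm hVxm) (hXsq xp hxp hVxp)
  have hXimg : X '' Ioo xm xp = Ioo (-a) a := hXxm ▸ hXxp ▸
    (hXcont.mono hIcc).image_Ioo_of_strictMonoOn hxmxp.le (hXmono.mono hIcc)
  have hleft : LeftInvOn xinv X (Ioo xm xp) := fun x hx => hinv x (hIoo hx)
  have hφd : ∀ s ∈ Ioo (-a) a, DifferentiableAt ℝ xinv s :=
    hXimg ▸ forall_mem_image.2 fun x hx => hdiff x (hIoo hx)
  have hVφ : ∀ s ∈ Ioo (-a) a, V (xinv s) = ω ^ 2 / 2 * s ^ 2 :=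
    hXimg ▸ forall_mem_image.2 fun x hx => by rw [hleft hx, hXV x (hIoo hx)]; ring
  have hV' : ∀ x ∈ Ioo p q, HasDerivAt V (deriv V x) x := fun x hx =>
    ((hV.differentiableOn one_ne_zero x hx).differentiableAt (isOpen_Ioo.mem_nhds hx)).hasDerivAt
  have hg : IntervalIntegrable (fun x => 1 / √(E - V x)) volume xm xp := by
    refine intervalIntegrable_one_div_sqrt_sub_of_hasDerivAt hxmxp.le (hV.continuousOn.mono hIcc)
      (hV' xm hxm) (hV' xp hxp) (neg_of_mul_pos_right (hconv xm hxm hxmneg.ne) hxmneg.le)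
      (pos_of_mul_pos_right (hconv xp hxp hxppos.ne') hxppos.le) hVxm hVxp fun x hx => ?_
    have hXx : X x ∈ Ioo (-a) a := hXimg ▸ mem_image_of_mem X hx
    rw [hXV x (hIoo hx)]
    linarith [mul_lt_mul_of_pos_left (sq_lt_sq' hXx.1 hXx.2) (pow_pos hω 2)]
  obtain ⟨hiff, hsubst⟩ := integral_one_div_sqrt_sub_eq_of_monotoneOn hω ha.le hxmxp.le hEa
    (hXimg ▸ (hXmono.mono hIoo).monotoneOn_image_of_leftInvOn hleft) hφd
    (hXimg ▸ hleft.image_image) hVφ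
  obtain ⟨hu, hfold⟩ := integral_deriv_sub_comp_neg_div_sqrt ha hφd (hiff.1 hg)
  subst hΔ
  exact ⟨hg, hu, by rw [hsubst, hfold]⟩

/-- **Change of variable in the period integral.**
Let `V` be continuously differentiable on an open interval `I = (p,q)` around `0`
with `V(0) = V'(0) = 0`, `V''(0) = ω² > 0`, and `x V'(x) > 0` on `I \ {0}`.
For `E > 0` let `x₋(E) < 0 < x₊(E)` be the unique turning points in `I`.
Define the increasing change of variable `X(x)` by `V(x) = ½ ω² X(x)²` with
`sign(X(x)) = sign(x)`, let `x(X)` be its inverse and `Δ(X) = x(X) − x(−X)`.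
Then the period integral satisfies
`T(E) = √2 ∫_{x₋}^{x₊} dx/√(E − V(x)) = (2/ω) ∫₀¹ Δ'((√(2E)/ω) u)/√(1 − u²) du`,
both integrals being convergent. -/
theorem period_integral_change_of_variable
    (ω : ℝ) (hω : 0 < ω) (p q : ℝ) (hp : p < 0) (hq : 0 < q)
    (V : ℝ → ℝ) (hV : ContDiffOn ℝ 1 V (Ioo p q))
    (hV0 : V 0 = 0) (hV'0 : deriv V 0 = 0) (hV''0 : deriv (deriv V) 0 = ω ^ 2)
    (hconv : ∀ x ∈ Ioo p q, x ≠ 0 → 0 < x * deriv V x)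
    (E : ℝ) (hE : 0 < E)
    (xm xp : ℝ) (hxm : xm ∈ Ioo p q) (hxp : xp ∈ Ioo p q)
    (hxmneg : xm < 0) (hxppos : 0 < xp)
    (hVxm : V xm = E) (hVxp : V xp = E)
    (huniq : ∀ x ∈ Ioo p q, V x = E → x = xm ∨ x = xp)
    (X : ℝ → ℝ) (hXcont : ContinuousOn X (Ioo p q))
    (hXmono : StrictMonoOn X (Ioo p q))
    (hXV : ∀ x ∈ Ioo p q, V x = (1 / 2) * ω ^ 2 * X x ^ 2)
    (hXsign : ∀ x ∈ Ioo p q, Real.sign (X x) = Real.sign x)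
    (xinv : ℝ → ℝ) (hinv : ∀ x ∈ Ioo p q, xinv (X x) = x)
    (hdiff : ∀ x ∈ Ioo p q, DifferentiableAt ℝ xinv (X x))
    (Δ : ℝ → ℝ) (hΔ : Δ = fun s => xinv s - xinv (-s)) :
    IntervalIntegrable (fun x => 1 / Real.sqrt (E - V x)) volume xm xp ∧
      IntervalIntegrable
        (fun u => deriv Δ (Real.sqrt (2 * E) / ω * u) / Real.sqrt (1 - u ^ 2))
        volume 0 1 ∧
      Real.sqrt 2 * (∫ x in xm..xp, 1 / Real.sqrt (E - V x)) =
        (2 / ω) *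
          ∫ u in (0 : ℝ)..1,
            deriv Δ (Real.sqrt (2 * E) / ω * u) / Real.sqrt (1 - u ^ 2) :=
  period_integral_change_of_variable_general ω hω p q V hV hconv E hE xm xp hxm hxp hxmneg hxppos
    hVxm hVxp X hXcont hXmono hXV xinv hinv hdiff Δ hΔ
end

section
/- Let Ṽ(x) = x²/2 + Σ_{n≥3} (α_{n−1}/n) xⁿ be a formal power series over ℝ and x(X) = X + Σ_{n≥2} σ_n Xⁿ the unique formal power series with leading coefficient 1 satisfying Ṽ(x(X)) = X²/2. Then σ₃ = 0 if and only if α₃ = (10/9) α₂² (the condition for the oscillation in Ṽ to be isochronous up to order 2, i.e. for the linear-in-energy term of the period to vanish). -/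
open PowerSeries

/-!
Only the truncations to degree 4 matter for the coefficients of `X³` and `X⁴` in `Ṽ(x(X))`.
Comparing them with `X²/2` gives `σ₂ + α₂/3 = 0` and `σ₃ + σ₂²/2 + α₂σ₂ + α₃/4 = 0`,
hence `σ₃ = (5/18) α₂² - α₃/4`.
-/

namespace Polynomial

variable {R : Type*} [CommSemiring R] {q : R[X]}

theorem coeff_pow_of_lt_of_coeff_zero (hq : q.coeff 0 = 0) {k n : ℕ} (h : n < k) :
    (q ^ k).coeff n = 0 :=
  X_pow_dvd_iff.mp (pow_dvd_pow_of_dvd (X_dvd_iff.mpr hq) k) n h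

theorem coeff_pow_self_of_coeff_zero (hq : q.coeff 0 = 0) (k : ℕ) :
    (q ^ k).coeff k = q.coeff 1 ^ k := by
  obtain ⟨r, rfl⟩ := X_dvd_iff.mpr hq
  simp [mul_pow, coeff_X_pow_mul', coeff_X_mul, coeff_zero_eq_eval_zero]

theorem coeff_sq_three_of_coeff_zero (hq : q.coeff 0 = 0) :
    (q ^ 2).coeff 3 = 2 * q.coeff 1 * q.coeff 2 := by
  simp [hq, sq, coeff_mul, Finset.Nat.antidiagonal_succ]
  ring

theorem coeff_sq_four_of_coeff_zero (hq : q.coeff 0 = 0) :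
    (q ^ 2).coeff 4 = 2 * q.coeff 1 * q.coeff 3 + q.coeff 2 ^ 2 := by
  simp [hq, sq, coeff_mul, Finset.Nat.antidiagonal_succ]
  ring

theorem coeff_cube_four_of_coeff_zero (hq : q.coeff 0 = 0) :
    (q ^ 3).coeff 4 = 3 * q.coeff 1 ^ 2 * q.coeff 2 := by
  simp [hq, pow_succ, coeff_mul, Finset.Nat.antidiagonal_succ]
  ring

variable (a b c : R)

theorem coeff_three_quartic_comp (hq : q.coeff 0 = 0) :
    ((C a * X ^ 2 + C b * X ^ 3 + C c * X ^ 4).comp q).coeff 3 =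
      a * (2 * q.coeff 1 * q.coeff 2) + b * q.coeff 1 ^ 3 := by
  simp [coeff_sq_three_of_coeff_zero hq, coeff_pow_self_of_coeff_zero hq,
    coeff_pow_of_lt_of_coeff_zero hq]

theorem coeff_four_quartic_comp (hq : q.coeff 0 = 0) :
    ((C a * X ^ 2 + C b * X ^ 3 + C c * X ^ 4).comp q).coeff 4 =
      a * (2 * q.coeff 1 * q.coeff 3 + q.coeff 2 ^ 2) + b * (3 * q.coeff 1 ^ 2 * q.coeff 2) +
        c * q.coeff 1 ^ 4 := by
  simp [coeff_sq_four_of_coeff_zero hq, coeff_cube_four_of_coeff_zero hq,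
    coeff_pow_self_of_coeff_zero hq]

end Polynomial

/-- **Isochronism up to order 2.**
Let `Ṽ(x) = x²/2 + Σ_{n≥3} (α_{n−1}/n) xⁿ` be a formal power series over `ℝ` and
`x(X) = X + Σ_{n≥2} σ_n Xⁿ` the unique formal power series with leading
coefficient `1` satisfying `Ṽ(x(X)) = X²/2` (composition encoded via polynomial
truncations).  Then `σ₃ = 0` if and only if `α₃ = (10/9) α₂²`, the condition for
the oscillation in `Ṽ` to be isochronous up to order 2. -/
theorem isochronism_order_two_iff
    (α σ : ℕ → ℝ) (Vt xs : PowerSeries ℝ)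
    (hVt : ∀ n : ℕ, PowerSeries.coeff n Vt =
      if n = 2 then 1 / 2 else if 3 ≤ n then α (n - 1) / n else 0)
    (hxs0 : PowerSeries.coeff 0 xs = 0)
    (hxs1 : PowerSeries.coeff 1 xs = 1)
    (hxsn : ∀ n : ℕ, 2 ≤ n → PowerSeries.coeff n xs = σ n)
    (hcomp : ∀ N n : ℕ, n < N →
      ((PowerSeries.trunc N Vt).comp (PowerSeries.trunc N xs)).coeff n =
        if n = 2 then 1 / 2 else 0) :
    σ 3 = 0 ↔ α 3 = (10 / 9) * α 2 ^ 2 := by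
  have hV : trunc 5 Vt = Polynomial.C (1 / 2) * Polynomial.X ^ 2 +
      Polynomial.C (α 2 / 3) * Polynomial.X ^ 3 + Polynomial.C (α 3 / 4) * Polynomial.X ^ 4 := by
    ext n
    rcases n with _ | _ | _ | _ | _ | n <;>
      simp [coeff_trunc, hVt, Polynomial.coeff_X_pow]
  have hx0 : (trunc 5 xs).coeff 0 = 0 := by simp [coeff_trunc, hxs0]
  have hx1 : (trunc 5 xs).coeff 1 = 1 := by simp [coeff_trunc, hxs1]
  have hx : ∀ n, 2 ≤ n → n < 5 → (trunc 5 xs).coeff n = σ n := fun n h2 h5 => by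
    rw [coeff_trunc, if_pos h5, hxsn n h2]
  have h3 := hcomp 5 3 (by norm_num)
  have h4 := hcomp 5 4 (by norm_num)
  rw [hV, Polynomial.coeff_three_quartic_comp _ _ _ hx0] at h3
  rw [hV, Polynomial.coeff_four_quartic_comp _ _ _ hx0] at h4
  rw [hx1, hx 2 le_rfl (by norm_num)] at h3 h4
  rw [hx 3 (by norm_num) (by norm_num)] at h4
  norm_num at h3 h4
  have hσ2 : σ 2 = -α 2 / 3 := by linarith
  have hσ3 : σ 3 = 5 / 18 * α 2 ^ 2 - α 3 / 4 := by rw [hσ2] at h4; linarith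
  rw [hσ3]
  constructor <;> intro h <;> linarith
end

section
/- Let Ṽ(x) = x²/2 + Σ_{n≥3} (α_{n−1}/n) xⁿ be a formal power series over ℝ and x(X) = X + Σ_{n≥2} σ_n Xⁿ the unique formal power series with leading coefficient 1 satisfying Ṽ(x(X)) = X²/2. Then: (i) σ₃ = σ₅ = 0 if and only if α₃ = (10/9) α₂² and α₅ = −(56/27) α₂⁴ + (14/5) α₄ α₂; (ii) σ₃ = σ₅ = σ₇ = 0 if and only if, in addition, α₇ = (24/7) α₆ α₂ − (592/45) α₄ α₂³ + (36/25) α₄² + (848/81) α₂⁶. These are the constraints on the Taylor coefficients of a 1D potential isochronous up to orders 3 and 4 respectively. -/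
/-!
Comparing the coefficients of `X³, …, X⁸` in `Ṽ(x(X)) = X²/2` gives a triangular system: the
coefficient of `Xⁿ` is `σ_{n-1}` plus a polynomial in the `α`'s and the `σ_k` with `k < n - 1`.
Solving it expresses `σ₃, σ₅, σ₇` through the `α`'s. Then `σ₃` is a nonzero multiple of
`α₃ - (10/9) α₂²`, on the zero locus of that defect `σ₅` is a nonzero multiple of the defect of
the `α₅` constraint, and on the zero locus of both `σ₇` is one of the defect of the `α₇` constraint.
-/

open PowerSeries

theorem coeff_trunc_comp_trunc {R : Type*} [CommSemiring R] (f g : R⟦X⟧) {N n : ℕ} (hn : n < N) :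
    ((trunc N f).comp (trunc N g)).coeff n = ∑ i ∈ Finset.range N, coeff i f * coeff n (g ^ i) := by
  rw [Polynomial.comp, eval₂_trunc_eq_sum_range, Polynomial.finsetSum_coeff]
  refine Finset.sum_congr rfl fun i _ => ?_
  rw [Polynomial.coeff_C_mul, ← Polynomial.coeff_coe, Polynomial.coe_pow,
    ← coeff_coe_trunc_of_lt hn, trunc_trunc_pow, coeff_coe_trunc_of_lt hn]

theorem coeff_pow_of_constantCoeff_eq_zero {R : Type*} [CommSemiring R] {g : R⟦X⟧}
    (hg : constantCoeff g = 0) (i n : ℕ) :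
    coeff n (g ^ i) = if i ≤ n then coeff (n - i) ((mk fun m => coeff (m + 1) g) ^ i) else 0 := by
  conv_lhs => rw [eq_X_mul_shift_add_const g, hg, map_zero, add_zero, mul_pow]
  exact coeff_X_pow_mul' _ _ _

theorem sigma_eq_of_coeff_comp {α σ : ℕ → ℝ} {Vt xs : ℝ⟦X⟧}
    (hVt : ∀ n : ℕ, coeff n Vt = if n = 2 then 1 / 2 else if 3 ≤ n then α (n - 1) / n else 0)
    (hxs0 : coeff 0 xs = 0) (hxs1 : coeff 1 xs = 1)
    (hxsn : ∀ n : ℕ, 2 ≤ n → coeff n xs = σ n)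
    (hcomp : ∀ n : ℕ,
      ∑ i ∈ Finset.range (n + 1), coeff i Vt * coeff n (xs ^ i) = if n = 2 then 1 / 2 else 0) :
    σ 3 = -(1 / 4) * α 3 + (5 / 18) * α 2 ^ 2 ∧
    σ 5 = -(1 / 6) * α 5 + (7 / 32) * α 3 ^ 2 + (7 / 15) * α 2 * α 4 - (7 / 8) * α 2 ^ 2 * α 3
      + (77 / 216) * α 2 ^ 4 ∧
    σ 7 = -(1 / 8) * α 7 + (9 / 50) * α 4 ^ 2 + (3 / 8) * α 3 * α 5 - (33 / 128) * α 3 ^ 3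
      + (3 / 7) * α 2 * α 6 - (33 / 20) * α 2 * α 3 * α 4 - (11 / 12) * α 2 ^ 2 * α 5
      + (143 / 64) * α 2 ^ 2 * α 3 ^ 2 + (143 / 90) * α 2 ^ 3 * α 4 - (715 / 288) * α 2 ^ 4 * α 3
      + (2431 / 3888) * α 2 ^ 6 := by
  have hshift : ∀ m, coeff m (mk fun m => coeff (m + 1) xs) = if m = 0 then 1 else σ (m + 1) := by
    rintro (_ | m)
    · simpa using hxs1
    · simpa using hxsn (m + 2) (by omega)
  have hconst : constantCoeff xs = 0 := by rwa [← coeff_zero_eq_constantCoeff_apply]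
  have e3 := hcomp 3
  have e4 := hcomp 4
  have e5 := hcomp 5
  have e6 := hcomp 6
  have e7 := hcomp 7
  have e8 := hcomp 8
  simp only [coeff_pow_of_constantCoeff_eq_zero hconst,
    Finset.sum_range_succ, Finset.sum_range_zero, hVt, pow_succ, coeff_mul,
    Finset.Nat.sum_antidiagonal_succ, hshift] at e3 e4 e5 e6 e7 e8
  norm_num at e3 e4 e5 e6 e7 e8
  have hs2 : σ 2 = -(1 / 3) * α 2 := by linear_combination e3
  rw [hs2] at e4 e5 e6 e7 e8
  have hs3 : σ 3 = -(1 / 4) * α 3 + (5 / 18) * α 2 ^ 2 := by linear_combination e4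
  rw [hs3] at e5 e6 e7 e8
  have hs4 : σ 4 = -(1 / 5) * α 4 + (1 / 2) * α 2 * α 3 - (8 / 27) * α 2 ^ 3 := by
    linear_combination e5
  rw [hs4] at e6 e7 e8
  have hs5 : σ 5 = -(1 / 6) * α 5 + (7 / 32) * α 3 ^ 2 + (7 / 15) * α 2 * α 4
      - (7 / 8) * α 2 ^ 2 * α 3 + (77 / 216) * α 2 ^ 4 := by
    linear_combination e6
  rw [hs5] at e7 e8
  have hs6 : σ 6 = -(1 / 7) * α 6 + (2 / 5) * α 3 * α 4 + (4 / 9) * α 2 * α 5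
      - (5 / 6) * α 2 * α 3 ^ 2 - (8 / 9) * α 2 ^ 2 * α 4 + (40 / 27) * α 2 ^ 3 * α 3
      - (112 / 243) * α 2 ^ 5 := by
    linear_combination e7
  rw [hs6] at e8
  exact ⟨hs3, hs5, by linear_combination e8⟩

theorem eq_zero_iff_of_eq_mul_sub {R : Type*} [CommRing R] [NoZeroDivisors R] {x a b c : R}
    (hc : c ≠ 0) (hx : x = c * (a - b)) : x = 0 ↔ a = b := by
  rw [hx, mul_eq_zero, sub_eq_zero, or_iff_right hc]

theorem isochronism_iff_of_sigma_eq {α σ : ℕ → ℝ}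
    (hs3 : σ 3 = -(1 / 4) * α 3 + (5 / 18) * α 2 ^ 2)
    (hs5 : σ 5 = -(1 / 6) * α 5 + (7 / 32) * α 3 ^ 2 + (7 / 15) * α 2 * α 4
      - (7 / 8) * α 2 ^ 2 * α 3 + (77 / 216) * α 2 ^ 4)
    (hs7 : σ 7 = -(1 / 8) * α 7 + (9 / 50) * α 4 ^ 2 + (3 / 8) * α 3 * α 5 - (33 / 128) * α 3 ^ 3
      + (3 / 7) * α 2 * α 6 - (33 / 20) * α 2 * α 3 * α 4 - (11 / 12) * α 2 ^ 2 * α 5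
      + (143 / 64) * α 2 ^ 2 * α 3 ^ 2 + (143 / 90) * α 2 ^ 3 * α 4 - (715 / 288) * α 2 ^ 4 * α 3
      + (2431 / 3888) * α 2 ^ 6) :
    ((σ 3 = 0 ∧ σ 5 = 0) ↔
      (α 3 = (10 / 9) * α 2 ^ 2 ∧
        α 5 = -(56 / 27) * α 2 ^ 4 + (14 / 5) * α 4 * α 2)) ∧
    ((σ 3 = 0 ∧ σ 5 = 0 ∧ σ 7 = 0) ↔
      (α 3 = (10 / 9) * α 2 ^ 2 ∧
        α 5 = -(56 / 27) * α 2 ^ 4 + (14 / 5) * α 4 * α 2 ∧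
        α 7 = (24 / 7) * α 6 * α 2 - (592 / 45) * α 4 * α 2 ^ 3
          + (36 / 25) * α 4 ^ 2 + (848 / 81) * α 2 ^ 6)) := by
  have k3 : σ 3 = 0 ↔ α 3 = (10 / 9) * α 2 ^ 2 :=
    eq_zero_iff_of_eq_mul_sub (c := -(1 / 4)) (by norm_num) (by linear_combination hs3)
  have k5 (hA3 : α 3 = (10 / 9) * α 2 ^ 2) :
      σ 5 = 0 ↔ α 5 = -(56 / 27) * α 2 ^ 4 + (14 / 5) * α 4 * α 2 :=
    eq_zero_iff_of_eq_mul_sub (c := -(1 / 6)) (by norm_num) <| by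
      linear_combination hs5 + ((7 / 32) * α 3 - (91 / 144) * α 2 ^ 2) * hA3
  have k7 (hA3 : α 3 = (10 / 9) * α 2 ^ 2)
      (hA5 : α 5 = -(56 / 27) * α 2 ^ 4 + (14 / 5) * α 4 * α 2) :
      σ 7 = 0 ↔ α 7 = (24 / 7) * α 6 * α 2 - (592 / 45) * α 4 * α 2 ^ 3
          + (36 / 25) * α 4 ^ 2 + (848 / 81) * α 2 ^ 6 :=
    eq_zero_iff_of_eq_mul_sub (c := -(1 / 8)) (by norm_num) <| by
      linear_combination hs7 + ((3 / 8) * α 5 - (33 / 128) * α 3 ^ 2 - (33 / 20) * α 2 * α 4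
        + (187 / 96) * α 2 ^ 2 * α 3 - (275 / 864) * α 2 ^ 4) * hA3 - (1 / 2) * α 2 ^ 2 * hA5
  rw [k3]
  exact ⟨and_congr_right k5,
    and_congr_right fun hA3 => by rw [k5 hA3]; exact and_congr_right (k7 hA3)⟩

/-- **Isochronism up to orders 3 and 4.**
Let `Ṽ(x) = x²/2 + Σ_{n≥3} (α_{n−1}/n) xⁿ` be a formal power series over `ℝ` and
`x(X) = X + Σ_{n≥2} σ_n Xⁿ` the unique formal power series with leading
coefficient `1` satisfying `Ṽ(x(X)) = X²/2` (composition encoded via polynomial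
truncations).  Then:
(i) `σ₃ = σ₅ = 0` iff `α₃ = (10/9) α₂²` and `α₅ = −(56/27) α₂⁴ + (14/5) α₄ α₂`;
(ii) `σ₃ = σ₅ = σ₇ = 0` iff, in addition,
`α₇ = (24/7) α₆ α₂ − (592/45) α₄ α₂³ + (36/25) α₄² + (848/81) α₂⁶`. -/
theorem isochronism_orders_three_four_iff
    (α σ : ℕ → ℝ) (Vt xs : PowerSeries ℝ)
    (hVt : ∀ n : ℕ, PowerSeries.coeff n Vt =
      if n = 2 then 1 / 2 else if 3 ≤ n then α (n - 1) / n else 0)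
    (hxs0 : PowerSeries.coeff 0 xs = 0)
    (hxs1 : PowerSeries.coeff 1 xs = 1)
    (hxsn : ∀ n : ℕ, 2 ≤ n → PowerSeries.coeff n xs = σ n)
    (hcomp : ∀ N n : ℕ, n < N →
      ((PowerSeries.trunc N Vt).comp (PowerSeries.trunc N xs)).coeff n =
        if n = 2 then 1 / 2 else 0) :
    ((σ 3 = 0 ∧ σ 5 = 0) ↔
      (α 3 = (10 / 9) * α 2 ^ 2 ∧
        α 5 = -(56 / 27) * α 2 ^ 4 + (14 / 5) * α 4 * α 2)) ∧
    ((σ 3 = 0 ∧ σ 5 = 0 ∧ σ 7 = 0) ↔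
      (α 3 = (10 / 9) * α 2 ^ 2 ∧
        α 5 = -(56 / 27) * α 2 ^ 4 + (14 / 5) * α 4 * α 2 ∧
        α 7 = (24 / 7) * α 6 * α 2 - (592 / 45) * α 4 * α 2 ^ 3
          + (36 / 25) * α 4 ^ 2 + (848 / 81) * α 2 ^ 6)) := by
  obtain ⟨hs3, hs5, hs7⟩ := sigma_eq_of_coeff_comp hVt hxs0 hxs1 hxsn fun n => by
    rw [← coeff_trunc_comp_trunc Vt xs n.lt_succ_self]
    exact hcomp (n + 1) n n.lt_succ_self
  exact isochronism_iff_of_sigma_eq hs3 hs5 hs7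
end

section
/- Fix an integer n ≥ 1 and constants c > 0, γ > 0, and for each integer N ≥ 2 define the bifurcation energy density ε_N = (c sin²(π/N)/(n γ))^{1/n} and the total bifurcation energy E_N = N ε_N. Then N^{2/n − 1} E_N converges to (c π²/(n γ))^{1/n} as N → ∞; in particular, E_N → 0 if n = 1, E_N converges to the finite nonzero limit (c π²/(2γ))^{1/2} if n = 2, and E_N → ∞ if n ≥ 3. Hence families of discrete breathers bifurcating from band edge modes isochronous up to order n ≥ 2 possess a nonzero energy threshold in the thermodynamic limit, while for n = 1 there is none. -/
open Real Filter

/-!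
Since `N sin (π / N) = π sinc (π / N) → π`, the identity
`N ^ (2/n - 1) E_N = (c (N sin (π / N))² / (n γ)) ^ (1/n)` gives the scaling limit
`L = (c π² / (n γ)) ^ (1/n) > 0`. Then `E_N = N ^ (1 - 2/n) · (N ^ (2/n - 1) E_N)`, and the three
regimes are read off the sign of `1 - 2/n`.
-/

lemma mul_sin_div_eq_mul_sinc (a : ℝ) {x : ℝ} (hx : x ≠ 0) :
    x * sin (a / x) = a * sinc (a / x) := by
  rcases eq_or_ne a 0 with rfl | ha
  · simp
  · rw [sinc_of_ne_zero (div_ne_zero ha hx)]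
    field_simp

lemma tendsto_mul_sin_div_atTop (a : ℝ) :
    Tendsto (fun x : ℝ => x * sin (a / x)) atTop (nhds a) := by
  have hsinc : Tendsto (fun x : ℝ => a * sinc (a / x)) atTop (nhds (a * sinc 0)) :=
    ((continuous_sinc.tendsto 0).comp (tendsto_const_nhds.div_atTop tendsto_id)).const_mul a
  rw [sinc_zero, mul_one] at hsinc
  refine hsinc.congr' ?_
  filter_upwards [eventually_ne_atTop 0] with x hx
  exact (mul_sin_div_eq_mul_sinc a hx).symm

lemma rpow_two_mul_sub_one_mul_mul_rpow {x : ℝ} (hx : 0 < x) {y : ℝ} (hy : 0 ≤ y) (p : ℝ) :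
    x ^ (2 * p - 1) * (x * y ^ p) = (x ^ 2 * y) ^ p := by
  rw [mul_rpow (by positivity) hy, ← rpow_natCast, ← rpow_mul hx.le, rpow_sub_one hx.ne']
  field_simp
  push_cast
  ring_nf

lemma natCast_rpow_neg_mul_rpow_mul (f : ℕ → ℝ) (a : ℝ) :
    ∀ᶠ N : ℕ in atTop, (N : ℝ) ^ (-a) * ((N : ℝ) ^ a * f N) = f N := by
  filter_upwards [eventually_ne_atTop 0] with N hN
  rw [rpow_neg (Nat.cast_nonneg N), inv_mul_cancel_left₀ (by positivity)]

lemma tendsto_zero_of_tendsto_natCast_rpow_mul {f : ℕ → ℝ} {a L : ℝ} (ha : 0 < a)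
    (h : Tendsto (fun N : ℕ => (N : ℝ) ^ a * f N) atTop (nhds L)) :
    Tendsto f atTop (nhds 0) := by
  have hdecay := (tendsto_rpow_neg_atTop ha).comp tendsto_natCast_atTop_atTop
  simpa using (hdecay.mul h).congr' (natCast_rpow_neg_mul_rpow_mul f a)

lemma tendsto_atTop_of_tendsto_natCast_rpow_mul {f : ℕ → ℝ} {a L : ℝ} (ha : a < 0) (hL : 0 < L)
    (h : Tendsto (fun N : ℕ => (N : ℝ) ^ a * f N) atTop (nhds L)) :
    Tendsto f atTop atTop := by
  have hgrowth := (tendsto_rpow_atTop (neg_pos.2 ha)).comp tendsto_natCast_atTop_atTop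
  exact (hgrowth.atTop_mul_pos hL h).congr' (natCast_rpow_neg_mul_rpow_mul f a)

theorem total_bifurcation_energy_scaling_general
    (n : ℕ) (c γ : ℝ) (hc : 0 < c) (hγ : 0 < γ)
    (ε E : ℕ → ℝ)
    (hε : ∀ N : ℕ, 2 ≤ N →
      ε N = (c * Real.sin (π / N) ^ 2 / (n * γ)) ^ ((1 : ℝ) / n))
    (hE : ∀ N : ℕ, 2 ≤ N → E N = N * ε N) :
    Tendsto (fun N : ℕ => (N : ℝ) ^ ((2 : ℝ) / n - 1) * E N) atTop
        (nhds ((c * π ^ 2 / (n * γ)) ^ ((1 : ℝ) / n))) ∧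
      (n = 1 → Tendsto E atTop (nhds 0)) ∧
      (n = 2 → Tendsto E atTop (nhds ((c * π ^ 2 / (2 * γ)) ^ ((1 : ℝ) / 2)))) ∧
      (3 ≤ n → Tendsto E atTop atTop) := by
  have hscaled : ∀ᶠ N : ℕ in atTop, (c * ((N : ℝ) * sin (π / N)) ^ 2 / (n * γ)) ^ ((1 : ℝ) / n)
      = (N : ℝ) ^ ((2 : ℝ) / n - 1) * E N := by
    filter_upwards [eventually_ge_atTop 2] with N hN
    rw [hE N hN, hε N hN, show (2 : ℝ) / n - 1 = 2 * (1 / n) - 1 by ring,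
      rpow_two_mul_sub_one_mul_mul_rpow (by positivity) (by positivity)]
    ring_nf
  have hmain : Tendsto (fun N : ℕ => (N : ℝ) ^ ((2 : ℝ) / n - 1) * E N) atTop
      (nhds ((c * π ^ 2 / (n * γ)) ^ ((1 : ℝ) / n))) := by
    have hcont : Continuous fun x : ℝ => (c * x ^ 2 / (n * γ)) ^ ((1 : ℝ) / n) :=
      (by fun_prop : Continuous fun x : ℝ => c * x ^ 2 / (n * γ)).rpow_const
        fun _ => Or.inr (by positivity)
    exact ((hcont.tendsto π).comp
      ((tendsto_mul_sin_div_atTop π).comp tendsto_natCast_atTop_atTop)).congr' hscaled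
  refine ⟨hmain, ?_, ?_, ?_⟩
  · rintro rfl
    exact tendsto_zero_of_tendsto_natCast_rpow_mul (by norm_num) hmain
  · rintro rfl
    simpa using hmain
  · intro hn
    have hn' : (3 : ℝ) ≤ n := by exact_mod_cast hn
    refine tendsto_atTop_of_tendsto_natCast_rpow_mul ?_ (by positivity) hmain
    rw [sub_neg, div_lt_one (by positivity)]
    linarith

/-- **Scaling of the total bifurcation energy and energy thresholds.**
Fix `n ≥ 1` and `c, γ > 0`, and for `N ≥ 2` let
`ε_N = (c sin²(π/N)/(nγ))^{1/n}` and `E_N = N ε_N`.  Then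
`N^{2/n − 1} E_N → (c π²/(nγ))^{1/n}` as `N → ∞`; in particular `E_N → 0` for
`n = 1`, `E_N → (c π²/(2γ))^{1/2}` for `n = 2`, and `E_N → ∞` for `n ≥ 3`. -/
theorem total_bifurcation_energy_scaling
    (n : ℕ) (hn : 1 ≤ n) (c γ : ℝ) (hc : 0 < c) (hγ : 0 < γ)
    (ε E : ℕ → ℝ)
    (hε : ∀ N : ℕ, 2 ≤ N →
      ε N = (c * Real.sin (π / N) ^ 2 / (n * γ)) ^ ((1 : ℝ) / n))
    (hE : ∀ N : ℕ, 2 ≤ N → E N = N * ε N) :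
    Tendsto (fun N : ℕ => (N : ℝ) ^ ((2 : ℝ) / n - 1) * E N) atTop
        (nhds ((c * π ^ 2 / (n * γ)) ^ ((1 : ℝ) / n))) ∧
      (n = 1 → Tendsto E atTop (nhds 0)) ∧
      (n = 2 → Tendsto E atTop (nhds ((c * π ^ 2 / (2 * γ)) ^ ((1 : ℝ) / 2)))) ∧
      (3 ≤ n → Tendsto E atTop atTop) :=
  total_bifurcation_energy_scaling_general n c γ hc hγ ε E hε hE
end
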